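/- arXiv:1609.01011 — 3 statements merged into one kernel-verified Lean document; each statement's English description precedes it below -/
import Mathlib

section
/- The numerical inequality (ζ(3) - 1) + (π³/48)·ζ(3) < 979/1000 holds, where ζ(3) = Σ_{n≥1} n^{-3}. -/
/-!
The tail of `ζ(3)` telescopes: `x⁻³ ≤ 2/(2x-1)² - 2/(2x+1)²` for `x > 1/2`, so
`∑_{n > N} n⁻³ ≤ 2/(2N+1)²`, an error of order `N⁻⁴`. With `N = 5` this gives
`ζ(3) < 1.2022`, and together with `π < 3.1416` the inequality follows numerically.
-/

open Real Finset

lemma inv_pow_three_le_sub (x : ℝ) (hx : 1 / 2 < x) :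
    (x ^ 3)⁻¹ ≤ 2 / (2 * x - 1) ^ 2 - 2 / (2 * x + 1) ^ 2 := by
  have hx₀ : 0 < x := by linarith
  have hx₁ : 0 < 2 * x - 1 := by linarith
  rw [div_sub_div _ _ (by positivity) (by positivity), inv_eq_one_div,
    div_le_div_iff₀ (by positivity) (by positivity)]
  nlinarith [pow_pos hx₀ 2, mul_pos hx₀ hx₁]

lemma tsum_inv_pow_three_nat_add_le (N : ℕ) :
    ∑' n : ℕ, ((((n + N : ℕ) : ℝ) + 1) ^ 3)⁻¹ ≤ 2 / (2 * (N : ℝ) + 1) ^ 2 := by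
  set g : ℕ → ℝ := fun n ↦ 2 / (2 * ((n + N : ℕ) : ℝ) + 1) ^ 2
  refine Real.tsum_le_of_sum_range_le (fun n ↦ by positivity) fun n ↦ ?_
  calc ∑ i ∈ range n, ((((i + N : ℕ) : ℝ) + 1) ^ 3)⁻¹
      ≤ ∑ i ∈ range n, (g i - g (i + 1)) := by
        refine sum_le_sum fun i _ ↦ ?_
        refine (inv_pow_three_le_sub _ ?_).trans_eq ?_
        · linarith [(i + N).cast_nonneg (α := ℝ)]
        · simp only [g]
          push_cast
          ring
    _ = g 0 - g n := sum_range_sub' g n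
    _ ≤ 2 / (2 * (N : ℝ) + 1) ^ 2 := by
        simp only [g, zero_add]
        linarith [show 0 ≤ g n by positivity]

lemma summable_inv_succ_pow_three : Summable fun n : ℕ ↦ (((n : ℝ) + 1) ^ 3)⁻¹ := by
  have := (summable_nat_add_iff 1).2 (Real.summable_nat_pow_inv.2 (by norm_num : 1 < 3))
  exact_mod_cast this

lemma tsum_inv_succ_pow_three_le (N : ℕ) :
    ∑' n : ℕ, (((n : ℝ) + 1) ^ 3)⁻¹ ≤
      ∑ n ∈ range N, (((n : ℝ) + 1) ^ 3)⁻¹ + 2 / (2 * (N : ℝ) + 1) ^ 2 := by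
  rw [← summable_inv_succ_pow_three.sum_add_tsum_nat_add N]
  gcongr
  exact tsum_inv_pow_three_nat_add_le N

lemma tsum_pnat_rpow_neg_three_le : ∑' n : ℕ+, (n : ℝ) ^ (-(3 : ℝ)) ≤ 1.2022 := by
  have hpow (x : ℝ) (hx : 0 ≤ x) : x ^ (-(3 : ℝ)) = (x ^ 3)⁻¹ := by
    rw [rpow_neg hx, ← rpow_natCast]; norm_num
  rw [tsum_pnat_eq_tsum_succ (f := fun n : ℕ ↦ (n : ℝ) ^ (-(3 : ℝ)))]
  calc ∑' n : ℕ, ((n + 1 : ℕ) : ℝ) ^ (-(3 : ℝ)) = ∑' n : ℕ, (((n : ℝ) + 1) ^ 3)⁻¹ := by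
        push_cast
        exact tsum_congr fun n ↦ hpow _ (by positivity)
    _ ≤ ∑ n ∈ range 5, (((n : ℝ) + 1) ^ 3)⁻¹ + 2 / (2 * ((5 : ℕ) : ℝ) + 1) ^ 2 :=
        tsum_inv_succ_pow_three_le 5
    _ ≤ 1.2022 := by norm_num [sum_range_succ]

theorem stmt_10 :
    (∑' n : ℕ+, ((n : ℝ)) ^ (-(3:ℝ))) - 1
      + (π ^ 3 / 48) * (∑' n : ℕ+, ((n : ℝ)) ^ (-(3:ℝ))) < 979 / 1000 := by
  set ζ₃ := ∑' n : ℕ+, (n : ℝ) ^ (-(3 : ℝ))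
  have hζ₃ : 0 ≤ ζ₃ := tsum_nonneg fun n ↦ by positivity
  calc ζ₃ - 1 + π ^ 3 / 48 * ζ₃ = ζ₃ * (1 + π ^ 3 / 48) - 1 := by ring
    _ ≤ 1.2022 * (1 + 3.1416 ^ 3 / 48) - 1 := by
        gcongr
        · exact tsum_pnat_rpow_neg_three_le
        · exact pi_lt_d4.le
    _ < 979 / 1000 := by norm_num
end

section
/- Let Ω be a set, 0 ∈ Ω a marked point, and let K₁, K₂, K₃ : Ω → ℝ be functions such that K₁(0), K₂(0), K₃(0) are pairwise distinct. Define f = (K₂ - K₃)/(K₂(0) - K₃(0)). Suppose (i) K₁ - K₂ = (K₁(0) - K₂(0))·f and K₁ - K₃ = (K₁(0) - K₃(0))·f (as functions), and (ii) for a positive measure ν on Ω and a function κ, ∫(K_i κ + 2K_i²) dν is the same for i = 1, 2, 3. Then ∫ f² dν = 0. In particular if ν gives positive mass to every nonempty open set containing 0 and f is continuous with f(0) = 1, this is a contradiction; hence at least two of K₁(0), K₂(0), K₃(0) must coincide under these hypotheses. -/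
/-!
Write `Q K = K κ + 2 K²`, `a = K₁(z) - K₂(z)`, `b = K₁(z) - K₃(z)`, so that `K₁ - K₂ = a f` and
`K₁ - K₃ = b f`. Since `Q K - Q G = (K - G)(κ + 2(K + G))`, the combination
`b (Q K₁ - Q K₂) - a (Q K₁ - Q K₃)` equals `2ab(b - a) f²` pointwise, while its integral vanishes by
the heat invariants. As `a`, `b` and `b - a = K₂(z) - K₃(z)` are nonzero, `∫ f² = 0`.
-/

open MeasureTheory

theorem sub_mul_heat_sub_sub_mul_heat_sub {R : Type*} [CommRing R] {k₁ k₂ k₃ x a b f : R}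
    (h₂ : k₁ - k₂ = a * f) (h₃ : k₁ - k₃ = b * f) :
    b * ((k₁ * x + 2 * k₁ ^ 2) - (k₂ * x + 2 * k₂ ^ 2))
      - a * ((k₁ * x + 2 * k₁ ^ 2) - (k₃ * x + 2 * k₃ ^ 2))
      = 2 * a * b * (b - a) * f ^ 2 := by
  linear_combination (b * (x + 2 * (k₁ + k₂)) - 2 * a * b * f) * h₂
    - (a * (x + 2 * (k₁ + k₃)) - 2 * a * b * f) * h₃

theorem MeasureTheory.Integrable.mul_add_two_mul_sq {Ω : Type*} [MeasurableSpace Ω]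
    {ν : Measure Ω} {K κ : Ω → ℝ} (hκ : Integrable (fun x => K x * κ x) ν)
    (hK : Integrable (fun x => K x * K x) ν) :
    Integrable (fun x => K x * κ x + 2 * K x ^ 2) ν := by
  simp only [sq]
  exact hκ.add (hK.const_mul 2)

theorem stmt_12_general {Ω : Type*} [MeasurableSpace Ω] (ν : Measure Ω)
    (z : Ω) (K₁ K₂ K₃ κ : Ω → ℝ)
    (hdist12 : K₁ z ≠ K₂ z) (hdist13 : K₁ z ≠ K₃ z) (hdist23 : K₂ z ≠ K₃ z)
    (f : Ω → ℝ)
    (h12 : ∀ b, K₁ b - K₂ b = (K₁ z - K₂ z) * f b)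
    (h13 : ∀ b, K₁ b - K₃ b = (K₁ z - K₃ z) * f b)
    (hint_κ : ∀ i ∈ ({K₁, K₂, K₃} : Set (Ω → ℝ)), Integrable (fun b => i b * κ b) ν)
    (hint_sq : ∀ i ∈ ({K₁, K₂, K₃} : Set (Ω → ℝ)), ∀ j ∈ ({K₁, K₂, K₃} : Set (Ω → ℝ)),
      Integrable (fun b => i b * j b) ν)
    (heat12 : ∫ b, (K₁ b * κ b + 2 * (K₁ b) ^ 2) ∂ν
            = ∫ b, (K₂ b * κ b + 2 * (K₂ b) ^ 2) ∂ν)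
    (heat13 : ∫ b, (K₁ b * κ b + 2 * (K₁ b) ^ 2) ∂ν
            = ∫ b, (K₃ b * κ b + 2 * (K₃ b) ^ 2) ∂ν) :
    ∫ b, (f b) ^ 2 ∂ν = 0 := by
  have hQ : ∀ K ∈ ({K₁, K₂, K₃} : Set (Ω → ℝ)),
      Integrable (fun b => K b * κ b + 2 * K b ^ 2) ν := fun K hK =>
    (hint_κ K hK).mul_add_two_mul_sq (hint_sq K hK K hK)
  have hQ₁ := hQ K₁ (by simp)
  have hQ₂ := hQ K₂ (by simp)
  have hQ₃ := hQ K₃ (by simp)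
  have ha : K₁ z - K₂ z ≠ 0 := sub_ne_zero.2 hdist12
  have hb : K₁ z - K₃ z ≠ 0 := sub_ne_zero.2 hdist13
  have hba : (K₁ z - K₃ z) - (K₁ z - K₂ z) ≠ 0 := by
    rw [sub_sub_sub_cancel_left]
    exact sub_ne_zero.2 hdist23
  refine (mul_eq_zero.mp ?_).resolve_left (by positivity :
    2 * (K₁ z - K₂ z) * (K₁ z - K₃ z) * ((K₁ z - K₃ z) - (K₁ z - K₂ z)) ≠ 0)
  rw [← integral_const_mul]
  simp_rw [← fun b => sub_mul_heat_sub_sub_mul_heat_sub (x := κ b) (h12 b) (h13 b)]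
  rw [integral_sub, integral_const_mul, integral_const_mul, integral_sub hQ₁ hQ₂,
    integral_sub hQ₁ hQ₃, ← heat12, ← heat13, sub_self, mul_zero, mul_zero, sub_self]
  exacts [(hQ₁.sub hQ₂).const_mul _, (hQ₁.sub hQ₃).const_mul _]

theorem stmt_12 {Ω : Type*} [MeasurableSpace Ω] (ν : Measure Ω)
    (z : Ω) (K₁ K₂ K₃ κ : Ω → ℝ)
    (hdist12 : K₁ z ≠ K₂ z) (hdist13 : K₁ z ≠ K₃ z) (hdist23 : K₂ z ≠ K₃ z)
    (f : Ω → ℝ) (hf : ∀ b, f b = (K₂ b - K₃ b) / (K₂ z - K₃ z))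
    (h12 : ∀ b, K₁ b - K₂ b = (K₁ z - K₂ z) * f b)
    (h13 : ∀ b, K₁ b - K₃ b = (K₁ z - K₃ z) * f b)
    (hint_κ : ∀ i ∈ ({K₁, K₂, K₃} : Set (Ω → ℝ)), Integrable (fun b => i b * κ b) ν)
    (hint_sq : ∀ i ∈ ({K₁, K₂, K₃} : Set (Ω → ℝ)), ∀ j ∈ ({K₁, K₂, K₃} : Set (Ω → ℝ)),
      Integrable (fun b => i b * j b) ν)
    (heat12 : ∫ b, (K₁ b * κ b + 2 * (K₁ b) ^ 2) ∂ν
            = ∫ b, (K₂ b * κ b + 2 * (K₂ b) ^ 2) ∂ν)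
    (heat13 : ∫ b, (K₁ b * κ b + 2 * (K₁ b) ^ 2) ∂ν
            = ∫ b, (K₃ b * κ b + 2 * (K₃ b) ^ 2) ∂ν) :
    ∫ b, (f b) ^ 2 ∂ν = 0 :=
  stmt_12_general ν z K₁ K₂ K₃ κ hdist12 hdist13 hdist23 f h12 h13 hint_κ hint_sq heat12 heat13
end

section
/- Let μ : ℝ/ℤ → ℝ be C¹ with ‖μ'‖ ≤ ε and c ≤ μ ≤ C < π. Define R(y) = y/sin y - 1 - y²/6. Then for each j ≥ 1 and q ≥ 2, |∫₀¹ R(μ(x)/q)·e^{2πijx} dx| ≤ C' ε/(j q⁴) for some constant C' depending only on c, C. -/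
open Real Complex Set

lemma mono_aux {f f' : ℝ → ℝ} (hd : ∀ t, HasDerivAt f (f' t) t)
    (h0 : ∀ t, 0 ≤ t → 0 ≤ f' t) {y : ℝ} (hy : 0 ≤ y) : f 0 ≤ f y := by
  have hm : MonotoneOn f (Ici (0:ℝ)) := by
    apply monotoneOn_of_deriv_nonneg (convex_Ici 0)
      (fun t _ => (hd t).continuousAt.continuousWithinAt)
      (fun t ht => (hd t).differentiableAt.differentiableWithinAt)
      (fun t ht => by
        rw [(hd t).deriv]
        exact h0 t (le_of_lt (by simpa [interior_Ici] using ht)))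
  exact hm (self_mem_Ici) hy hy

lemma sin_lb {y : ℝ} (hy : 0 ≤ y) : y - y ^ 3 / 6 ≤ Real.sin y := by
  have hd : ∀ t : ℝ, HasDerivAt (fun t => Real.sin t - (t - t ^ 3 / 6))
      (Real.cos t - (1 - t ^ 2 / 2)) t := by
    intro t
    have := ((Real.hasDerivAt_sin t).sub
      ((hasDerivAt_id t).sub (((hasDerivAt_pow 3 t)).div_const 6)))
    exact this.congr_deriv (by push_cast; ring)
  have := mono_aux hd (fun t _ => by
    nlinarith [Real.one_sub_sq_div_two_le_cos (x := t)]) hy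
  simp at this; linarith

lemma cos_ub {y : ℝ} (hy : 0 ≤ y) : Real.cos y ≤ 1 - y ^ 2 / 2 + y ^ 4 / 24 := by
  have hd : ∀ t : ℝ, HasDerivAt (fun t => 1 - t ^ 2 / 2 + t ^ 4 / 24 - Real.cos t)
      (Real.sin t - (t - t ^ 3 / 6)) t := by
    intro t
    have := ((((hasDerivAt_const t (1:ℝ)).sub ((hasDerivAt_pow 2 t).div_const 2)).add
      ((hasDerivAt_pow 4 t).div_const 24)).sub (Real.hasDerivAt_cos t))
    exact this.congr_deriv (by push_cast; ring)
  have := mono_aux hd (fun t ht => by linarith [sin_lb ht]) hy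
  simp at this; linarith

lemma sin_ub5 {y : ℝ} (hy : 0 ≤ y) : Real.sin y ≤ y - y ^ 3 / 6 + y ^ 5 / 120 := by
  have hd : ∀ t : ℝ, HasDerivAt (fun t => t - t ^ 3 / 6 + t ^ 5 / 120 - Real.sin t)
      (1 - t ^ 2 / 2 + t ^ 4 / 24 - Real.cos t) t := by
    intro t
    have := ((((hasDerivAt_id t).sub ((hasDerivAt_pow 3 t).div_const 6)).add
      (((hasDerivAt_pow 5 t)).div_const 120)).sub (Real.hasDerivAt_sin t))
    exact this.congr_deriv (by push_cast; ring)
  have := mono_aux hd (fun t ht => by linarith [cos_ub ht]) hy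
  simp at this; linarith

lemma rder_bound {y : ℝ} (hy0 : 0 < y) (hy : y ≤ π / 2) :
    |(Real.sin y - y * Real.cos y) / (Real.sin y) ^ 2 - y / 3| ≤ y ^ 3 := by
  have hyπ : y < π := lt_of_le_of_lt hy (by linarith [Real.pi_pos])
  have hs : 0 < Real.sin y := Real.sin_pos_of_pos_of_lt_pi hy0 hyπ
  have hslb : 2 / π * y ≤ Real.sin y := Real.mul_le_sin hy0.le hy
  have hsub : Real.sin y ≤ y := Real.sin_le hy0.le
  have hlb := sin_lb hy0.le
  have hub5 := sin_ub5 hy0.le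
  have hclb := Real.one_sub_sq_div_two_le_cos (x := y)
  have hcub := cos_ub hy0.le
  have hπ : 0 < π := Real.pi_pos
  -- rewrite as φ / sin^2
  have heq : (Real.sin y - y * Real.cos y) / (Real.sin y) ^ 2 - y / 3
      = (Real.sin y - y * Real.cos y - y / 3 * (Real.sin y) ^ 2) / (Real.sin y) ^ 2 := by
    field_simp
  rw [heq]
  have hs2 : (2 / π * y) ^ 2 ≤ (Real.sin y) ^ 2 := by
    apply pow_le_pow_left₀ (by positivity) hslb
  have hφ : |Real.sin y - y * Real.cos y - y / 3 * (Real.sin y) ^ 2| ≤ y ^ 5 / 5 := by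
    have h2 : |(Real.sin y) ^ 2 - y ^ 2| ≤ y ^ 4 / 3 := by
      have h1 : |Real.sin y - y| ≤ y ^ 3 / 6 := by
        rw [abs_sub_comm, _root_.abs_of_nonneg (by linarith)]; linarith
      have h2' : |Real.sin y + y| ≤ 2 * y := by
        rw [_root_.abs_of_nonneg (by linarith)]; linarith
      calc |(Real.sin y)^2 - y^2| = |Real.sin y - y| * |Real.sin y + y| := by
            rw [← abs_mul]; ring_nf
          _ ≤ y ^ 3 / 6 * (2 * y) := by
            apply mul_le_mul h1 h2' (abs_nonneg _) (by positivity)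
          _ = y ^ 4 / 3 := by ring
    rw [abs_le] at h2 ⊢
    constructor <;> nlinarith [abs_nonneg (Real.sin y - y), pow_pos hy0 5]
  rw [abs_div, _root_.abs_of_pos (show (0:ℝ) < (Real.sin y) ^ 2 by positivity),
    div_le_iff₀ (by positivity)]
  calc |Real.sin y - y * Real.cos y - y / 3 * (Real.sin y) ^ 2| ≤ y ^ 5 / 5 := hφ
    _ ≤ y ^ 3 * (2 / π * y) ^ 2 := by
        have hπ2 : π ^ 2 ≤ 20 := by nlinarith [Real.pi_lt_d2]
        have h15 : (1:ℝ) / 5 ≤ 4 / π ^ 2 := by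
          rw [div_le_div_iff₀ (by norm_num) (by positivity)]; linarith
        have : (2 / π * y) ^ 2 = 4 / π ^ 2 * y ^ 2 := by ring
        rw [this]
        calc y ^ 5 / 5 = y ^ 5 * (1 / 5) := by ring
          _ ≤ y ^ 5 * (4 / π ^ 2) := by
              exact mul_le_mul_of_nonneg_left h15 (by positivity)
          _ = y ^ 3 * (4 / π ^ 2 * y ^ 2) := by ring
    _ ≤ y ^ 3 * (Real.sin y) ^ 2 := by
        exact mul_le_mul_of_nonneg_left hs2 (by positivity)

theorem stmt_17 (c Cb : ℝ) (hc : 0 < c) (hCb : Cb < π) :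
    ∃ C' : ℝ, 0 < C' ∧
      ∀ (ε : ℝ) (μ : ℝ → ℝ), 0 < ε →
        ContDiff ℝ 1 μ → Function.Periodic μ 1 →
        (∀ x, c ≤ μ x) → (∀ x, μ x ≤ Cb) → (∀ x, |deriv μ x| ≤ ε) →
        ∀ (j q : ℕ), 1 ≤ j → 2 ≤ q →
          ‖∫ x in (0:ℝ)..1,
              (((μ x / q) / Real.sin (μ x / q) - 1 - (μ x / q) ^ 2 / 6 : ℝ) : ℂ) *
                Complex.exp (2 * π * j * x * Complex.I)‖
            ≤ C' * ε / (j * q ^ 4) := by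
  have hπ : (0:ℝ) < π := Real.pi_pos
  refine ⟨π ^ 3, by positivity, ?_⟩
  intro ε μ hε hμ hper hcl hcu hd' j q hj hq
  have hq' : (2:ℝ) ≤ (q:ℝ) := by exact_mod_cast hq
  have hq0 : (0:ℝ) < (q:ℝ) := by linarith
  have hj' : (1:ℝ) ≤ (j:ℝ) := by exact_mod_cast hj
  have hj0 : (0:ℝ) < (j:ℝ) := by linarith
  have hCb0 : 0 < Cb := lt_of_lt_of_le hc ((hcl 0).trans (hcu 0))
  -- basic bounds on w x = μ x / q
  have hw0 : ∀ x : ℝ, 0 < μ x / q := fun x => div_pos (lt_of_lt_of_le hc (hcl x)) hq0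
  have hwle : ∀ x : ℝ, μ x / q ≤ Cb / q := fun x => div_le_div_of_nonneg_right ?_ hq0.le
  rotate_left
  · exact hcu x
  have hwπ2 : ∀ x : ℝ, μ x / q ≤ π / 2 := by
    intro x
    refine (hwle x).trans ?_
    rw [div_le_div_iff₀ hq0 (by norm_num)]
    nlinarith
  have hsin : ∀ x : ℝ, Real.sin (μ x / q) ≠ 0 := by
    intro x
    refine ne_of_gt (Real.sin_pos_of_pos_of_lt_pi (hw0 x) ?_)
    exact lt_of_le_of_lt (hwπ2 x) (by linarith)
  set c₀ : ℂ := 2 * π * j * Complex.I with hc₀def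
  have hc₀r : c₀ = ((2 * π * j : ℝ) : ℂ) * Complex.I := by push_cast [hc₀def]; ring
  have hc₀ : c₀ ≠ 0 := by
    rw [hc₀r]
    refine mul_ne_zero (Complex.ofReal_ne_zero.mpr ?_) Complex.I_ne_zero
    positivity
  have hnc₀ : ‖c₀‖ = 2 * π * j := by
    rw [hc₀r, norm_mul, Complex.norm_real, Complex.norm_I, mul_one, Real.norm_eq_abs,
      _root_.abs_of_pos (by positivity)]
  -- functions for integration by parts
  set u : ℝ → ℂ := fun x => ((μ x / q / Real.sin (μ x / q) - 1 - (μ x / q) ^ 2 / 6 : ℝ) : ℂ)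
    with hudef
  set A : ℝ → ℝ := fun x =>
    ((Real.sin (μ x / q) - (μ x / q) * Real.cos (μ x / q)) / (Real.sin (μ x / q)) ^ 2
      - (μ x / q) / 3) * (deriv μ x / q) with hAdef
  set u' : ℝ → ℂ := fun x => ((A x : ℝ) : ℂ) with hu'def
  set v : ℝ → ℂ := fun x => Complex.exp (c₀ * x) / c₀ with hvdef
  set v' : ℝ → ℂ := fun x => Complex.exp (c₀ * x) with hv'def
  have hmu : ∀ x : ℝ, HasDerivAt μ (deriv μ x) x := fun x =>
    ((hμ.differentiable one_ne_zero) x).hasDerivAt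
  have hw : ∀ x : ℝ, HasDerivAt (fun x => μ x / q) (deriv μ x / q) x := fun x =>
    (hmu x).div_const q
  have hu : ∀ x : ℝ, HasDerivAt u (u' x) x := by
    intro x
    have h1 : HasDerivAt (fun y : ℝ => y / Real.sin y - 1 - y ^ 2 / 6)
        ((1 * Real.sin (μ x / q) - (μ x / q) * Real.cos (μ x / q)) / (Real.sin (μ x / q)) ^ 2
          - 0 - (2 * (μ x / q) ^ 1) / 6) (μ x / q) := by
      exact (((hasDerivAt_id (μ x / q)).div (Real.hasDerivAt_sin (μ x / q)) (hsin x)).sub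
        (hasDerivAt_const _ 1)).sub ((hasDerivAt_pow 2 (μ x / q)).div_const 6)
    have h2 := (h1.comp x (hw x)).ofReal_comp
    refine h2.congr_deriv ?_
    rw [hu'def, hAdef]
    push_cast
    ring
  have hv : ∀ x : ℝ, HasDerivAt v (v' x) x := by
    intro x
    have h0 : HasDerivAt (fun y : ℝ => ((y : ℝ) : ℂ)) 1 x := by
      simpa using (hasDerivAt_id x).ofReal_comp
    have hlin : HasDerivAt (fun y : ℝ => c₀ * (y : ℂ)) (c₀ * 1) x := h0.const_mul c₀
    have hexp := (Complex.hasDerivAt_exp (c₀ * x)).comp x hlin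
    have := hexp.div_const c₀
    refine this.congr_deriv ?_
    rw [hv'def]
    field_simp
  -- continuity / integrability
  have hwcont : Continuous (fun x => μ x / q) := hμ.continuous.div_const q
  have hAcont : Continuous A := by
    rw [hAdef]
    refine Continuous.mul ?_ ((hμ.continuous_deriv le_rfl).div_const q)
    refine Continuous.sub ?_ (hwcont.div_const 3)
    refine Continuous.div ((Real.continuous_sin.comp hwcont).sub
      (hwcont.mul (Real.continuous_cos.comp hwcont)))
      ((Real.continuous_sin.comp hwcont).pow 2) ?_
    intro x
    exact pow_ne_zero _ (hsin x)
  have hu'int : IntervalIntegrable u' MeasureTheory.volume 0 1 :=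
    (Complex.continuous_ofReal.comp hAcont).intervalIntegrable 0 1
  have hv'int : IntervalIntegrable v' MeasureTheory.volume 0 1 := by
    apply Continuous.intervalIntegrable
    exact Complex.continuous_exp.comp (continuous_const.mul Complex.continuous_ofReal)
  -- integration by parts
  have hibp := intervalIntegral.integral_mul_deriv_eq_deriv_mul
    (fun x _ => hu x) (fun x _ => hv x) hu'int hv'int
  -- boundary terms vanish
  have hμ10 : μ 1 = μ 0 := by simpa using hper 0
  have hv10 : v 1 = v 0 := by
    rw [hvdef]
    simp only
    congr 1
    rw [Complex.ofReal_one, Complex.ofReal_zero, mul_one, mul_zero, Complex.exp_zero]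
    have : c₀ = (j : ℤ) * (2 * π * Complex.I) := by push_cast [hc₀def]; ring
    rw [this, Complex.exp_int_mul_two_pi_mul_I]
  have hu10 : u 1 = u 0 := by rw [hudef]; simp only [hμ10]
  -- rewrite the goal integral
  have hgoal : (∫ x in (0:ℝ)..1,
      (((μ x / q) / Real.sin (μ x / q) - 1 - (μ x / q) ^ 2 / 6 : ℝ) : ℂ) *
        Complex.exp (2 * π * j * x * Complex.I)) = ∫ x in (0:ℝ)..1, u x * v' x := by
    apply intervalIntegral.integral_congr
    intro x _
    rw [hudef, hv'def]
    simp only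
    congr 2
    rw [hc₀def]
    push_cast
    ring
  rw [hgoal, hibp, hu10, hv10, sub_self, zero_sub, norm_neg]
  -- bound the remaining integral
  set B : ℝ := Cb ^ 3 * ε / q ^ 4 / (2 * π * j) with hBdef
  have hbound : ∀ x ∈ Set.uIoc (0:ℝ) 1, ‖u' x * v x‖ ≤ B := by
    intro x _
    have hAx : |A x| ≤ Cb ^ 3 * ε / q ^ 4 := by
      rw [hAdef]
      simp only
      rw [abs_mul]
      have h1 : |(Real.sin (μ x / q) - (μ x / q) * Real.cos (μ x / q)) /
          (Real.sin (μ x / q)) ^ 2 - (μ x / q) / 3| ≤ (μ x / q) ^ 3 :=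
        rder_bound (hw0 x) (hwπ2 x)
      have h1' : (μ x / q) ^ 3 ≤ (Cb / q) ^ 3 := by
        exact pow_le_pow_left₀ (hw0 x).le (hwle x) 3
      have h2 : |deriv μ x / q| ≤ ε / q := by
        rw [abs_div, _root_.abs_of_pos hq0]
        exact div_le_div_of_nonneg_right (hd' x) hq0.le
      calc |(Real.sin (μ x / q) - (μ x / q) * Real.cos (μ x / q)) /
            (Real.sin (μ x / q)) ^ 2 - (μ x / q) / 3| * |deriv μ x / q|
          ≤ (Cb / q) ^ 3 * (ε / q) := by
            apply mul_le_mul (h1.trans h1') h2 (abs_nonneg _) (by positivity)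
        _ = Cb ^ 3 * ε / q ^ 4 := by field_simp
    have hnv : ‖v x‖ = 1 / (2 * π * j) := by
      rw [hvdef]
      simp only
      rw [norm_div, hnc₀, Complex.norm_exp]
      have : (c₀ * x).re = 0 := by
        rw [hc₀r]
        simp [Complex.mul_re]
      rw [this, Real.exp_zero]
    rw [norm_mul, hu'def]
    simp only [Complex.norm_real, Real.norm_eq_abs]
    rw [hnv, hBdef]
    calc |A x| * (1 / (2 * π * j)) ≤ (Cb ^ 3 * ε / q ^ 4) * (1 / (2 * π * j)) := by
          apply mul_le_mul_of_nonneg_right hAx (by positivity)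
      _ = Cb ^ 3 * ε / q ^ 4 / (2 * π * j) := by ring
  have hnorm := intervalIntegral.norm_integral_le_of_norm_le_const hbound
  simp only [sub_zero, _root_.abs_of_nonneg (zero_le_one' ℝ), mul_one] at hnorm
  refine hnorm.trans ?_
  rw [hBdef]
  have hCb3 : Cb ^ 3 ≤ π ^ 3 := pow_le_pow_left₀ hCb0.le hCb.le 3
  have key : Cb ^ 3 * ε / q ^ 4 / (2 * π * j) = (Cb ^ 3 / (2 * π)) * (ε / (j * q ^ 4)) := by
    field_simp
  have key2 : π ^ 3 * ε / (j * q ^ 4) = π ^ 3 * (ε / (j * q ^ 4)) := by ring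
  rw [key, key2]
  apply mul_le_mul_of_nonneg_right _ (by positivity)
  rw [div_le_iff₀ (by positivity)]
  nlinarith [hCb3, pow_nonneg hπ.le 3, Real.pi_gt_three]
end
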